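/- arXiv:1903.00370 — 2 statements merged into one kernel-verified Lean document; each statement's English description precedes it below -/
import Mathlib

section
/- Let F be the Riesz space of bounded real functions on ℝ with countable support, E = ℝ·1 ⊕ F, and T : E → F the projection with range F and kernel ℝ·1 (T(λ·1 + f) = f). Then T is not order bounded: the image under T of the order bounded set {1_{{x}} : x ∈ [0,1]} ⊆ E is not order bounded in F. -/
open Filter MeasureTheory Set

/-- A nonempty, upward-directed index preorder (the index set of a net). -/
def IsDirectedIx (A : Type) [Preorder A] : Prop :=
  Nonempty A ∧ ∀ a b : A, ∃ c : A, a ≤ c ∧ b ≤ c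

/-- `φ : B → A` is a (Kelley) subnet selection map: monotone and cofinal. -/
def IsSubnet {A B : Type} [Preorder A] [Preorder B] (φ : B → A) : Prop :=
  Monotone φ ∧ ∀ a : A, ∃ b : B, a ≤ φ b

/-- `p : E → V` is a vector ("lattice") norm with values in the vector lattice `V`. -/
def IsVectorNorm {E V : Type} [AddCommGroup E] [Module ℝ E]
    [AddCommGroup V] [Lattice V] [Module ℝ V] (p : E → V) : Prop :=
  (∀ x, 0 ≤ p x) ∧ (∀ x, p x = 0 ↔ x = 0) ∧
  (∀ x y, p (x + y) ≤ p x + p y) ∧ (∀ (c : ℝ) (x : E), p (c • x) = |c| • p x)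

/-- `q`-convergence of the net `y` to `z` in a lattice-normed space `(E, q, V)`:
there is a decreasing net `e` in `V` with infimum `0` dominating `q (y α - z)` eventually. -/
def QConvNet {A E V : Type} [Preorder A] [AddCommGroup E]
    [AddCommGroup V] [Lattice V] (q : E → V) (y : A → E) (z : E) : Prop :=
  ∃ (Γ : Type) (_ : Preorder Γ), IsDirectedIx Γ ∧
    ∃ e : Γ → V, Antitone e ∧ IsGLB (Set.range e) 0 ∧
      ∀ γ : Γ, ∃ α₀ : A, ∀ α ≥ α₀, q (y α - z) ≤ e γ

/-- Relatively uniform `q`-convergence of the net `y` to `z`. -/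
def RUConvNet {A E V : Type} [Preorder A] [AddCommGroup E]
    [AddCommGroup V] [Lattice V] [Module ℝ V] (q : E → V) (y : A → E) (z : E) : Prop :=
  ∃ e : V, 0 ≤ e ∧ ∀ ε : ℝ, 0 < ε → ∃ α₀ : A, ∀ α ≥ α₀, q (y α - z) ≤ ε • e

/-- Order convergence of a net in a vector lattice. -/
def OConvNet {A G : Type} [Preorder A] [Lattice G] [AddCommGroup G]
    (f : A → G) (l : G) : Prop :=
  ∃ (Γ : Type) (_ : Preorder Γ), IsDirectedIx Γ ∧
    ∃ g : Γ → G, Antitone g ∧ IsGLB (Set.range g) 0 ∧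
      ∀ γ : Γ, ∃ α₀ : A, ∀ α ≥ α₀, |f α - l| ≤ g γ

/-- Unbounded order convergence of a net in a vector lattice. -/
def UOConvNet {A G : Type} [Preorder A] [Lattice G] [AddCommGroup G]
    (f : A → G) (l : G) : Prop :=
  ∀ h : G, 0 ≤ h → OConvNet (fun α => |f α - l| ⊓ h) 0

/-- Order convergence of a net computed inside the sublattice `S` of `G`:
the limit and the dominating decreasing net lie in `S`, and the dominating net
has infimum `0` relative to `S`. -/
def OConvNetIn {A G : Type} [Preorder A] [Lattice G] [AddCommGroup G]
    (S : Set G) (f : A → G) (l : G) : Prop :=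
  l ∈ S ∧ ∃ (Γ : Type) (_ : Preorder Γ), IsDirectedIx Γ ∧
    ∃ g : Γ → G, (∀ γ, g γ ∈ S) ∧ Antitone g ∧ (∀ γ, 0 ≤ g γ) ∧
      (∀ w ∈ S, (∀ γ, w ≤ g γ) → w ≤ 0) ∧
      ∀ γ : Γ, ∃ α₀ : A, ∀ α ≥ α₀, |f α - l| ≤ g γ

/-- Order convergence of a sequence inside the sublattice `S`. -/
def OConvSeqIn {G : Type} [Lattice G] [AddCommGroup G]
    (S : Set G) (f : ℕ → G) (l : G) : Prop :=
  OConvNetIn S f l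

/-- The Riesz space of bounded real functions on `ℝ` with countable support. -/
def Fspace : Set (ℝ → ℝ) :=
  {f | (∃ C : ℝ, ∀ x, |f x| ≤ C) ∧ Set.Countable {x | f x ≠ 0}}

/-- `E = ℝ·1 ⊕ F`: functions that are a constant plus a bounded function with
countable support. -/
def Espace : Set (ℝ → ℝ) :=
  {g | ∃ (c : ℝ) (f : ℝ → ℝ), f ∈ Fspace ∧ g = fun x => c + f x}

/-!
Every `1_{{x}}` lies in `F`, so `T` fixes it; an upper bound `b ∈ F` of these would satisfy
`b ≥ 1` on all of `[0,1]`, putting the uncountable interval inside the countable support of `b`.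
-/

open Cardinal

theorem not_countable_Icc_real {a b : ℝ} (h : a < b) : ¬ (Icc a b).Countable := fun hc =>
  aleph0_lt_continuum.not_ge (mk_Icc_real h ▸ hc.le_aleph0)

theorem exists_eq_zero_of_mem_Fspace {f : ℝ → ℝ} (hf : f ∈ Fspace) {s : Set ℝ}
    (hs : ¬ s.Countable) : ∃ x ∈ s, f x = 0 := by
  by_contra! hne
  exact hs (hf.2.mono hne)

theorem mem_Fspace_ite_eq (x c : ℝ) : (fun t => if t = x then c else 0) ∈ Fspace := by
  refine ⟨⟨|c|, fun t => ?_⟩, (countable_singleton x).mono fun t ht => ?_⟩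
  · dsimp only
    split_ifs <;> simp
  · by_contra hne
    exact ht (if_neg hne)

theorem Fspace_subset_Espace : Fspace ⊆ Espace := fun f hf =>
  ⟨0, f, hf, by simp⟩

theorem abs_ite_eq_le_one (x : ℝ) :
    |fun t : ℝ => if t = x then (1 : ℝ) else 0| ≤ fun _ => 1 := fun t => by
  by_cases h : t = x <;> simp [h]

theorem apply_eq_self_of_mem_Fspace {T : (ℝ → ℝ) → (ℝ → ℝ)}
    (hT : ∀ (c : ℝ) (f : ℝ → ℝ), f ∈ Fspace → T ((fun _ => c) + f) = f)
    {f : ℝ → ℝ} (hf : f ∈ Fspace) : T f = f :=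
  (congrArg T (zero_add f)).symm.trans (hT 0 f hf)

/-- **Example.** The projection `T : E = ℝ·1 ⊕ F → F` along `ℝ·1` is not order
bounded: the set `{1_{{x}} : x ∈ [0,1]}` is order bounded in `E` (by `1`), but
its image under `T` has no upper bound in `F`. -/
theorem projection_not_orderBounded
    (T : (ℝ → ℝ) → (ℝ → ℝ))
    (hT : ∀ (c : ℝ) (f : ℝ → ℝ), f ∈ Fspace → T ((fun _ => c) + f) = f) :
    (∀ x ∈ Set.Icc (0:ℝ) 1,
      (fun t => if t = x then (1:ℝ) else 0) ∈ Espace ∧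
      |fun t => if t = x then (1:ℝ) else 0| ≤ fun _ => (1:ℝ)) ∧
    ¬ ∃ b ∈ Fspace, ∀ x ∈ Set.Icc (0:ℝ) 1,
        T (fun t => if t = x then (1:ℝ) else 0) ≤ b := by
  refine ⟨fun x _ => ⟨Fspace_subset_Espace (mem_Fspace_ite_eq x 1), abs_ite_eq_le_one x⟩, ?_⟩
  rintro ⟨b, hb, hbound⟩
  obtain ⟨x, hx, hbx⟩ := exists_eq_zero_of_mem_Fspace hb (not_countable_Icc_real zero_lt_one)
  have hle : (1 : ℝ) ≤ b x := by
    simpa [apply_eq_self_of_mem_Fspace hT (mem_Fspace_ite_eq x 1)] using hbound x hx x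
  linarith
end

section
/- Let F be the Riesz space of bounded real functions on ℝ with countable support, E = ℝ·1 ⊕ F, and T : E → F the projection onto F along ℝ·1. Then T is sequentially order compact: for every order bounded sequence (f_n) in E there is a subsequence (f_{n_k}) such that (T f_{n_k}) order converges in F. -/
/-!
Write `f n = c n + g n` with `g n ∈ F`. Evaluating at a point outside all supports bounds the
constants `c n`, so the `g n` are uniformly bounded; they all vanish off the countable set
`A = ⋃ n, supp (g n)`, and compactness of `[-M, M]^A` (a diagonal argument) yields a
subsequence converging pointwise to some `l ∈ F`. The tail suprema
`x ↦ sup_{k ≥ m} |g (φ k) x - l x|` lie in `F`, decrease to `0` pointwise and dominate the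
tails, which is order convergence in `F`.
-/

open Filter MeasureTheory Set

open Topology

lemma exists_subseq_tendsto_of_countable {ι : Type*} [Countable ι] {u : ℕ → ι → ℝ}
    {M : ℝ} (hu : ∀ n i, |u n i| ≤ M) :
    ∃ φ : ℕ → ℕ, StrictMono φ ∧
      ∃ v : ι → ℝ, ∀ i, Tendsto (fun k => u (φ k) i) atTop (𝓝 (v i)) := by
  obtain ⟨v, -, φ, hφ, hv⟩ := (isCompact_univ_pi fun _ : ι => isCompact_Icc).tendsto_subseq
    (x := u) fun n i _ => abs_le.mp (hu n i)
  exact ⟨φ, hφ, v, tendsto_pi_nhds.mp hv⟩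

lemma exists_subseq_tendsto_of_support_subset {α : Type*} {A : Set α} (hA : A.Countable)
    {u : ℕ → α → ℝ} {M : ℝ} (hu : ∀ n x, |u n x| ≤ M)
    (hsupp : ∀ n, Function.support (u n) ⊆ A) :
    ∃ φ : ℕ → ℕ, StrictMono φ ∧
      ∃ l : α → ℝ, ∀ x, Tendsto (fun k => u (φ k) x) atTop (𝓝 (l x)) := by
  classical
  have := hA.to_subtype
  obtain ⟨φ, hφ, v, hv⟩ :=
    exists_subseq_tendsto_of_countable (u := fun n (a : A) => u n a) fun n a => hu n a
  refine ⟨φ, hφ, fun x => if hx : x ∈ A then v ⟨x, hx⟩ else 0, fun x => ?_⟩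
  by_cases hx : x ∈ A
  · simpa [hx] using hv ⟨x, hx⟩
  · simp [hx, Function.notMem_support.mp fun h => hx (hsupp _ h)]

/-- `sup_{n ≥ m} u n`; junk (`0`) unless `u` is bounded above. -/
noncomputable def tailSup (u : ℕ → ℝ) (m : ℕ) : ℝ := ⨆ k, u (m + k)

section tailSup

variable {u : ℕ → ℝ}

lemma le_tailSup (hu : BddAbove (range u)) {m n : ℕ} (h : m ≤ n) : u n ≤ tailSup u m := by
  obtain ⟨k, rfl⟩ := Nat.exists_eq_add_of_le h
  exact le_ciSup (hu.mono (range_comp_subset_range _ u)) k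

lemma tailSup_le {m : ℕ} {C : ℝ} (h : ∀ n ≥ m, u n ≤ C) : tailSup u m ≤ C :=
  ciSup_le fun k => h _ (Nat.le_add_right m k)

lemma tailSup_antitone (hu : BddAbove (range u)) : Antitone (tailSup u) :=
  fun _ _ hm => tailSup_le fun _ hn => le_tailSup hu (hm.trans hn)

lemma exists_tailSup_le_of_tendsto_zero (hu : Tendsto u atTop (𝓝 0)) {ε : ℝ}
    (hε : 0 < ε) : ∃ m, tailSup u m ≤ ε := by
  obtain ⟨m, hm⟩ := (hu.eventually (ge_mem_nhds hε)).exists_forall_of_atTop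
  exact ⟨m, tailSup_le hm⟩

end tailSup

lemma isDirectedIx_of_isDirected (A : Type) [Preorder A] [Nonempty A]
    [IsDirected A (· ≤ ·)] : IsDirectedIx A :=
  ⟨‹_›, directed_of (· ≤ ·)⟩

lemma exists_eq_zero_eq_zero_of_mem_Fspace {g h : ℝ → ℝ} (hg : g ∈ Fspace)
    (hh : h ∈ Fspace) : ∃ x, g x = 0 ∧ h x = 0 := by
  obtain ⟨x, hx⟩ := ((hg.2.union hh.2).dense_compl ℝ).nonempty
  exact ⟨x, by simpa [not_or] using hx⟩

lemma abs_le_of_abs_const_add_le {c d C : ℝ} {g h : ℝ → ℝ} (hg : g ∈ Fspace)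
    (hh : h ∈ Fspace) (hC : ∀ x, h x ≤ C) (hle : ∀ x, |c + g x| ≤ d + h x) (x : ℝ) :
    |g x| ≤ 2 * d + C := by
  obtain ⟨x₀, hgx₀, hhx₀⟩ := exists_eq_zero_eq_zero_of_mem_Fspace hg hh
  have hc : |c| ≤ d := by simpa [hgx₀, hhx₀] using hle x₀
  calc |g x| = |(c + g x) - c| := by ring_nf
    _ ≤ |c + g x| + |c| := abs_sub _ _
    _ ≤ 2 * d + C := by linarith [hle x, hC x]

lemma mem_Fspace_of_tendsto {g : ℕ → ℝ → ℝ} {l : ℝ → ℝ} {M : ℝ}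
    (hg : ∀ n, g n ∈ Fspace) (hM : ∀ n x, |g n x| ≤ M)
    (hl : ∀ x, Tendsto (fun n => g n x) atTop (𝓝 (l x))) : l ∈ Fspace := by
  refine ⟨⟨M, fun x => le_of_tendsto' (hl x).abs fun n => hM n x⟩,
    (countable_iUnion fun n => (hg n).2).mono fun x hx => ?_⟩
  by_contra hA
  simp only [mem_iUnion, not_exists, mem_ofPred_eq, not_not] at hA
  exact hx (tendsto_nhds_unique (hl x) (by simp [hA]))

theorem oConvSeqIn_Fspace_of_tendsto {g : ℕ → ℝ → ℝ} {l : ℝ → ℝ} {M : ℝ}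
    (hg : ∀ n, g n ∈ Fspace) (hM : ∀ n x, |g n x| ≤ M)
    (hl : ∀ x, Tendsto (fun n => g n x) atTop (𝓝 (l x))) :
    OConvSeqIn Fspace g l := by
  have hlF := mem_Fspace_of_tendsto hg hM hl
  have hlM : ∀ x, |l x| ≤ M := fun x => le_of_tendsto' (hl x).abs fun n => hM n x
  have hdist : ∀ n x, |g n x - l x| ≤ M + M := fun n x =>
    (abs_sub _ _).trans (add_le_add (hM n x) (hlM x))
  have hbdd : ∀ x, BddAbove (range fun n => |g n x - l x|) := fun x =>
    ⟨M + M, by rintro _ ⟨n, rfl⟩; exact hdist n x⟩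
  set G : ℕ → ℝ → ℝ := fun m x => tailSup (fun n => |g n x - l x|) m
  have hG_nonneg : ∀ m x, 0 ≤ G m x := fun m x =>
    (abs_nonneg _).trans (le_tailSup (hbdd x) le_rfl)
  have hG_mem : ∀ m, G m ∈ Fspace := fun m => by
    refine ⟨⟨M + M, fun x => ?_⟩,
      ((countable_iUnion fun n => (hg n).2).union hlF.2).mono fun x hx => ?_⟩
    · rw [abs_of_nonneg (hG_nonneg m x)]
      exact tailSup_le fun n _ => hdist n x
    · by_contra hA
      simp only [mem_union, mem_iUnion, not_or, not_exists, mem_ofPred_eq, not_not] at hA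
      exact hx (le_antisymm (tailSup_le fun n _ => by simp [hA.1 n, hA.2]) (hG_nonneg m x))
  refine ⟨hlF, ℕ, inferInstance, isDirectedIx_of_isDirected ℕ, G, hG_mem,
    fun m m' h x => tailSup_antitone (hbdd x) h, hG_nonneg, fun w _ hw x => ?_,
    fun m => ⟨m, fun n hn x => le_tailSup (hbdd x) hn⟩⟩
  refine le_of_forall_pos_le_add fun ε hε => ?_
  have hx : Tendsto (fun n => |g n x - l x|) atTop (𝓝 0) := by
    simpa using ((hl x).sub_const (l x)).abs
  obtain ⟨m, hm⟩ := exists_tailSup_le_of_tendsto_zero hx hε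
  simpa using (hw m x).trans hm

/-- **Example.** The projection `T : E = ℝ·1 ⊕ F → F` along `ℝ·1` is
sequentially order compact: every order bounded sequence in `E` has a
subsequence whose image under `T` order converges in `F`. -/
theorem projection_sequentially_order_compact
    (T : (ℝ → ℝ) → (ℝ → ℝ))
    (hT : ∀ (c : ℝ) (f : ℝ → ℝ), f ∈ Fspace → T ((fun _ => c) + f) = f)
    (f : ℕ → (ℝ → ℝ)) (hf : ∀ n, f n ∈ Espace)
    (hbdd : ∃ b ∈ Espace, ∀ n, |f n| ≤ b) :
    ∃ φ : ℕ → ℕ, StrictMono φ ∧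
      ∃ l : ℝ → ℝ, OConvSeqIn Fspace (fun k => T (f (φ k))) l := by
  choose c g hg hfg using hf
  obtain ⟨_, ⟨d, h, hh, rfl⟩, hb⟩ := hbdd
  obtain ⟨C, hC⟩ := hh.1
  have hTf : ∀ n, T (f n) = g n := fun n => by rw [hfg n]; exact hT (c n) (g n) (hg n)
  have hgM : ∀ n x, |g n x| ≤ 2 * d + C := fun n =>
    abs_le_of_abs_const_add_le (hg n) hh (fun x => (abs_le.mp (hC x)).2)
      fun x => by simpa [hfg n] using hb n x
  obtain ⟨φ, hφ, l, hl⟩ := exists_subseq_tendsto_of_support_subset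
    (countable_iUnion fun n => (hg n).2) hgM (subset_iUnion fun n => Function.support (g n))
  refine ⟨φ, hφ, l, ?_⟩
  simp only [hTf]
  exact oConvSeqIn_Fspace_of_tendsto (fun k => hg (φ k)) (fun k => hgM (φ k)) hl
end
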